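/- Fix p with 1 < p < ∞ and let q be its conjugate exponent. Let (f_m) and f in Lᵖ(ℝⁿ) be such that f_m converges to f weakly, i.e. ∫_{ℝⁿ} f_m g dx → ∫_{ℝⁿ} f g dx for every g ∈ L^q(ℝⁿ). Then Σ_{k=1}^∞ t_k · |∫_{B_k} (f_m − f) dx|² → 0 as m → ∞. (Weakly convergent sequences in Lᵖ converge strongly in the KS²-norm: the embedding Lᵖ(ℝⁿ) → KS²(ℝⁿ) is compact.) -/

import Mathlib

open MeasureTheory Filter Topology
open scoped ENNReal

/-- The closed cube in `ℝⁿ` with sides parallel to the coordinate axes, center `c`, and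
diagonal `2⁻ˡ` (so half-side `2⁻ˡ / (2 √n)`). -/
def rationalCube (n : ℕ) (c : Fin n → ℝ) (l : ℕ) : Set (Fin n → ℝ) :=
  {x | ∀ i, |x i - c i| ≤ (2 : ℝ) ^ (-(l : ℤ)) / (2 * Real.sqrt n)}

section Aux

lemma KS2aux.rationalCube_eq (n : ℕ) (c : Fin n → ℝ) (l : ℕ) :
    rationalCube n c l = Set.pi Set.univ
      (fun i => Metric.closedBall (c i) ((2 : ℝ) ^ (-(l : ℤ)) / (2 * Real.sqrt n))) := by
  ext x
  simp [rationalCube, Set.mem_pi, Metric.mem_closedBall, Real.dist_eq]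

lemma KS2aux.rationalCube_measurable (n : ℕ) (c : Fin n → ℝ) (l : ℕ) :
    MeasurableSet (rationalCube n c l) := by
  rw [KS2aux.rationalCube_eq]
  exact MeasurableSet.univ_pi fun i => measurableSet_closedBall

lemma KS2aux.rationalCube_volume_le (n : ℕ) (c : Fin n → ℝ) (l : ℕ) :
    volume (rationalCube n c l) ≤ 1 := by
  rw [KS2aux.rationalCube_eq, volume_pi_pi]
  refine Finset.prod_le_one' fun i _ => ?_
  rw [Real.volume_closedBall, ENNReal.ofReal_le_one]
  have hn : (1 : ℝ) ≤ Real.sqrt n := by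
    rw [show (1:ℝ) = Real.sqrt 1 by simp]
    exact Real.sqrt_le_sqrt (by exact_mod_cast i.pos)
  have h2 : (2 : ℝ) ^ (-(l : ℤ)) ≤ 1 := zpow_le_one_of_nonpos₀ one_le_two (by simp)
  have hpos : (0:ℝ) < Real.sqrt n := lt_of_lt_of_le one_pos hn
  rw [mul_div_assoc', div_le_one (by positivity)]
  nlinarith [h2, hn]

variable {α : Type*} [MeasurableSpace α] {μ : Measure α}

lemma KS2aux.conj_inv_eq {p q : ℝ} (hpq : p.HolderConjugate q) :
    1 / (1 : ℝ≥0∞) = 1 / ENNReal.ofReal p + 1 / ENNReal.ofReal q := by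
  rw [one_div, one_div, one_div, inv_one, ← ENNReal.ofReal_inv_of_pos hpq.pos,
    ← ENNReal.ofReal_inv_of_pos hpq.symm.pos,
    ← ENNReal.ofReal_add (inv_pos.mpr hpq.pos).le (inv_pos.mpr hpq.symm.pos).le,
    hpq.inv_add_inv_eq_one, ENNReal.ofReal_one]

lemma KS2aux.mul_int {p q : ℝ} (hpq : p.HolderConjugate q) {h g : α → ℂ}
    (hh : MemLp h (ENNReal.ofReal p) μ) (hg : MemLp g (ENNReal.ofReal q) μ) :
    Integrable (fun x => h x * g x) μ := by
  rw [← memLp_one_iff_integrable]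
  exact MemLp.smul hg hh (hpqr := ⟨by have h := KS2aux.conj_inv_eq hpq; simp only [one_div, inv_one] at h ⊢; exact h.symm⟩)

lemma KS2aux.mul_int_bound {p q : ℝ} (hpq : p.HolderConjugate q) {h g : α → ℂ}
    (hh : MemLp h (ENNReal.ofReal p) μ) (hg : MemLp g (ENNReal.ofReal q) μ) :
    ‖∫ x, h x * g x ∂μ‖ ≤
      (eLpNorm h (ENNReal.ofReal p) μ).toReal * (eLpNorm g (ENNReal.ofReal q) μ).toReal := by
  have h1 : eLpNorm (h • g) 1 μ ≤
      eLpNorm h (ENNReal.ofReal p) μ * eLpNorm g (ENNReal.ofReal q) μ :=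
    eLpNorm_smul_le_mul_eLpNorm hg.1 hh.1 (hpqr := ⟨by have h := KS2aux.conj_inv_eq hpq; simp only [one_div, inv_one] at h ⊢; exact h.symm⟩)
  have heq : (h • g) = fun x => h x * g x := by funext x; rfl
  rw [heq] at h1
  have h2 : ‖∫ x, h x * g x ∂μ‖ ≤ (eLpNorm (fun x => h x * g x) 1 μ).toReal := by
    rw [eLpNorm_one_eq_lintegral_enorm]
    refine le_trans (norm_integral_le_lintegral_norm _) (le_of_eq ?_)
    congr 1
    simp_rw [ofReal_norm_eq_enorm]
  refine h2.trans ?_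
  rw [← ENNReal.toReal_mul]
  exact ENNReal.toReal_mono (ENNReal.mul_ne_top hh.eLpNorm_ne_top hg.eLpNorm_ne_top) h1

lemma KS2aux.pairing_exists {p q : ℝ} (hpq : p.HolderConjugate q)
    [Fact ((1:ℝ≥0∞) ≤ ENNReal.ofReal q)]
    {h : α → ℂ} (hh : MemLp h (ENNReal.ofReal p) μ) :
    ∃ T : Lp ℂ (ENNReal.ofReal q) μ →L[ℂ] ℂ,
      ∀ u : Lp ℂ (ENNReal.ofReal q) μ, T u = ∫ x, h x * u x ∂μ := by
  refine ⟨LinearMap.mkContinuous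
    { toFun := fun u : Lp ℂ (ENNReal.ofReal q) μ => ∫ x, h x * u x ∂μ
      map_add' := fun u v => ?_
      map_smul' := fun c u => ?_ } ((eLpNorm h (ENNReal.ofReal p) μ).toReal)
    (fun u => ?_), fun u => rfl⟩
  · 
    have : ∫ x, h x * (↑(u + v) : α → ℂ) x ∂μ = ∫ x, (h x * u x + h x * v x) ∂μ := by
      refine integral_congr_ae ?_
      filter_upwards [Lp.coeFn_add u v] with x hx
      rw [hx]; simp [mul_add]
    rw [this, integral_add (KS2aux.mul_int hpq hh (Lp.memLp u))
      (KS2aux.mul_int hpq hh (Lp.memLp v))]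
  · dsimp only [RingHom.id_apply]
    have : ∫ x, h x * (↑(c • u) : α → ℂ) x ∂μ = ∫ x, c • (h x * u x) ∂μ := by
      refine integral_congr_ae ?_
      filter_upwards [Lp.coeFn_smul c u] with x hx
      rw [hx]; simp [smul_eq_mul]; ring
    rw [this, integral_smul]
  · rw [Lp.norm_def]
    exact KS2aux.mul_int_bound hpq hh (Lp.memLp u)

end Aux

/-- **Compactness of the embedding `Lᵖ(ℝⁿ) → KS²(ℝⁿ)`.** Let `(B_k)` enumerate the closed
cubes with rational center and diagonal `2⁻ˡ`, and let `(t_k)` be positive reals summing to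
`1`. For `1 < p < ∞` with conjugate exponent `q`, if `f_m → f` weakly in `Lᵖ(ℝⁿ)` (i.e.
`∫ f_m g → ∫ f g` for all `g ∈ L^q`), then `Σ_k t_k |∫_{B_k} (f_m − f)|² → 0`: weakly
convergent sequences in `Lᵖ` converge strongly in the `KS²`-norm. -/
theorem lp_to_KS2_compact (n : ℕ) (K : ℕ → Set (Fin n → ℝ))
    (hK : ∀ k, ∃ (c : Fin n → ℝ) (l : ℕ),
      (∀ i, ∃ q : ℚ, c i = (q : ℝ)) ∧ K k = rationalCube n c l)
    (hK' : ∀ (c : Fin n → ℝ) (l : ℕ), (∀ i, ∃ q : ℚ, c i = (q : ℝ)) →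
      ∃ k, K k = rationalCube n c l)
    (t : ℕ → ℝ) (ht : ∀ k, 0 < t k) (htsum : HasSum t 1)
    (p q : ℝ) (hpq : p.HolderConjugate q)
    (fm : ℕ → (Fin n → ℝ) → ℂ) (f : (Fin n → ℝ) → ℂ)
    (hfm : ∀ m, MemLp (fm m) (ENNReal.ofReal p) volume)
    (hf : MemLp f (ENNReal.ofReal p) volume)
    (hweak : ∀ g : (Fin n → ℝ) → ℂ, MemLp g (ENNReal.ofReal q) volume →
      Tendsto (fun m => ∫ x, fm m x * g x) atTop (𝓝 (∫ x, f x * g x))) :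
    Tendsto (fun m => ∑' k, t k * ‖∫ x in K k, (fm m x - f x)‖ ^ 2) atTop (𝓝 0) := by
  clear hK'
  haveI : Fact ((1:ℝ≥0∞) ≤ ENNReal.ofReal q) := ⟨by
    rw [← ENNReal.ofReal_one]
    exact ENNReal.ofReal_le_ofReal hpq.symm.lt.le⟩
  have hQ0 : ENNReal.ofReal q ≠ 0 := by
    simp only [ne_eq, ENNReal.ofReal_eq_zero, not_le]
    exact hpq.symm.pos
  have hQtop : ENNReal.ofReal q ≠ ∞ := ENNReal.ofReal_ne_top
  -- cubes
  have hmeas : ∀ k, MeasurableSet (K k) := by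
    intro k; obtain ⟨c, l, -, hkl⟩ := hK k; rw [hkl]
    exact KS2aux.rationalCube_measurable n c l
  have hvol : ∀ k, volume (K k) ≤ 1 := by
    intro k; obtain ⟨c, l, -, hkl⟩ := hK k; rw [hkl]
    exact KS2aux.rationalCube_volume_le n c l
  -- indicators
  set χ : ℕ → (Fin n → ℝ) → ℂ := fun k => (K k).indicator (fun _ => (1:ℂ)) with hχ
  have hχmem : ∀ k, MemLp (χ k) (ENNReal.ofReal q) volume := fun k =>
    memLp_indicator_const _ (hmeas k) 1 (Or.inr (((hvol k).trans_lt ENNReal.one_lt_top).ne))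
  set g : ℕ → Lp ℂ (ENNReal.ofReal q) volume := fun k => ((hχmem k).toLp (χ k)) with hg
  have hgnorm : ∀ k, ‖g k‖ ≤ 1 := by
    intro k
    rw [hg]
    rw [Lp.norm_toLp]
    refine ENNReal.toReal_le_of_le_ofReal zero_le_one ?_
    rw [ENNReal.ofReal_one, hχ, eLpNorm_indicator_const (hmeas k) hQ0 hQtop]
    simp only [enorm_one, ENNReal.coe_one, one_mul]
    exact ENNReal.rpow_le_one (hvol k) (div_nonneg zero_le_one ENNReal.toReal_nonneg)
  have hind : ∀ (h : (Fin n → ℝ) → ℂ) k, (fun x => h x * χ k x) = (K k).indicator h := by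
    intro h k; funext x
    by_cases hx : x ∈ K k <;> simp [hχ, Set.indicator_apply, hx]
  have hrepr : ∀ (h : (Fin n → ℝ) → ℂ) k, ∫ x, h x * χ k x = ∫ x in K k, h x := by
    intro h k
    rw [hind h k, integral_indicator (hmeas k)]
  have hIntOn : ∀ (h : (Fin n → ℝ) → ℂ), MemLp h (ENNReal.ofReal p) volume → ∀ k,
      IntegrableOn h (K k) volume := by
    intro h hh k
    have h1 : Integrable (fun x => h x * χ k x) volume := KS2aux.mul_int hpq hh (hχmem k)
    rw [hind h k] at h1
    exact (integrable_indicator_iff (hmeas k)).mp h1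
  -- pairings
  obtain ⟨Tf, hTf⟩ := KS2aux.pairing_exists hpq hf
  choose T hT using fun m => KS2aux.pairing_exists hpq (hfm m)
  have hTg : ∀ m k, T m (g k) = ∫ x in K k, fm m x := by
    intro m k
    rw [hT m (g k), ← hrepr (fm m) k]
    refine integral_congr_ae ?_
    filter_upwards [(hχmem k).coeFn_toLp] with x hx
    rw [hg, hx]
  have hTfg : ∀ k, Tf (g k) = ∫ x in K k, f x := by
    intro k
    rw [hTf (g k), ← hrepr f k]
    refine integral_congr_ae ?_
    filter_upwards [(hχmem k).coeFn_toLp] with x hx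
    rw [hg, hx]
  -- uniform bound
  have hbdd : ∀ u : Lp ℂ (ENNReal.ofReal q) volume, ∃ C, ∀ m, ‖T m u‖ ≤ C := by
    intro u
    have hconv : Tendsto (fun m => T m u) atTop (𝓝 (∫ x, f x * u x)) := by
      simp_rw [hT]
      exact hweak _ (Lp.memLp u)
    obtain ⟨C, hC⟩ := hconv.norm.bddAbove_range
    exact ⟨C, fun m => hC ⟨m, rfl⟩⟩
  obtain ⟨C0, hC0⟩ := banach_steinhaus hbdd
  set D : ℝ := max C0 0 + ‖Tf‖ with hD
  -- difference formula
  have hsub : ∀ m k, ∫ x in K k, (fm m x - f x) = T m (g k) - Tf (g k) := by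
    intro m k
    rw [hTg m k, hTfg k, integral_sub (hIntOn (fm m) (hfm m) k) (hIntOn f hf k)]
  -- dominated convergence of the series
  have hsummable : Summable (fun k => t k * D ^ 2) := htsum.summable.mul_right _
  have hpt : ∀ k, Tendsto (fun m => t k * ‖∫ x in K k, (fm m x - f x)‖ ^ 2) atTop (𝓝 0) := by
    intro k
    have hw : Tendsto (fun m => ∫ x in K k, fm m x) atTop (𝓝 (∫ x in K k, f x)) := by
      have h0 := hweak (χ k) (hχmem k)
      rw [hrepr f k] at h0
      exact h0.congr (fun m => hrepr (fm m) k)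
    have h1 : Tendsto (fun m => ∫ x in K k, (fm m x - f x)) atTop (𝓝 0) := by
      have h2 := hw.sub (tendsto_const_nhds (x := ∫ x in K k, f x))
      rw [sub_self] at h2
      exact h2.congr fun m =>
        (integral_sub (hIntOn (fm m) (hfm m) k) (hIntOn f hf k)).symm
    have := ((h1.norm.pow 2).const_mul (t k))
    simpa using this
  have hbnd : ∀ᶠ m in atTop, ∀ k,
      ‖t k * ‖∫ x in K k, (fm m x - f x)‖ ^ 2‖ ≤ t k * D ^ 2 := by
    refine Eventually.of_forall fun m k => ?_
    have hb : ‖∫ x in K k, (fm m x - f x)‖ ≤ D := by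
      rw [hsub m k]
      calc ‖T m (g k) - Tf (g k)‖ ≤ ‖T m (g k)‖ + ‖Tf (g k)‖ := norm_sub_le _ _
        _ ≤ ‖T m‖ * ‖g k‖ + ‖Tf‖ * ‖g k‖ :=
          add_le_add ((T m).le_opNorm _) (Tf.le_opNorm _)
        _ ≤ max C0 0 * 1 + ‖Tf‖ * 1 := by
          gcongr
          · exact (hC0 m).trans (le_max_left _ _)
          · exact hgnorm k
          · exact hgnorm k
        _ = D := by rw [hD]; ring
    rw [Real.norm_eq_abs, abs_of_nonneg (mul_nonneg (ht k).le (by positivity))]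
    exact mul_le_mul_of_nonneg_left
      (pow_le_pow_left₀ (norm_nonneg _) hb 2) (ht k).le
  have := tendsto_tsum_of_dominated_convergence (𝓕 := atTop)
    (f := fun m k => t k * ‖∫ x in K k, (fm m x - f x)‖ ^ 2)
    (g := fun _ => (0:ℝ)) hsummable hpt hbnd
  simpa using this
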